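/- Birationality of the flop correspondence: suppose β_i = 1 and β_{i+1} = m−1 for some 1 ≤ i ≤ n−1, and let (L_•) ∈ Y_β be such that z(L_{i+1}) is NOT contained in L_{i−1}. Then M := L_{i+1} ⊓ z⁻¹(L_{i−1}) (where z⁻¹(L_{i−1}) = Submodule.comap z L_{i−1}) is the unique ℂ-subspace of V satisfying all of: L_{i−1} ≤ M ≤ L_{i+1}, finrank_ℂ M = finrank_ℂ L_{i−1} + (m−1), z(L_{i+1}) ≤ M, and z(M) ≤ L_{i−1}. (This is the claim that the projection from the correspondence Z_β^i ⊂ Y_β × Y_{s_i(β)} to Y_β is one-to-one over the complement of the locus X_β^i = {z(L_{i+1}) ≤ L_{i−1}}.) -/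
import Mathlib


open Module

/-- `Vsp m` models `ℂ^m ⊗ z^{-1}ℂ[z^{-1}]`: finitely supported sequences of vectors in `ℂ^m`,
the index `n` corresponding to `z^{-(n+1)}`. -/
abbrev Vsp (m : ℕ) : Type := ℕ →₀ (Fin m → ℂ)

/-- The shift operator `z`: `(z f)(n) = f (n+1)`. -/
noncomputable def zmap (m : ℕ) : Vsp m →ₗ[ℂ] Vsp m :=
  Finsupp.lcomapDomain Nat.succ Nat.succ_injective

/-- `Yset m n β` is the set of chains `⊥ = L 0 ≤ L 1 ≤ ⋯ ≤ L n` of finite-dimensional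
subspaces of `V` with `finrank (L i) = β 1 + ⋯ + β i` and `z (L i) ≤ L (i-1)`.
(The paper's `β_1, …, β_n` are the 0-based `β 0, …, β (n-1)` here.) -/
def Yset (m n : ℕ) (β : Fin n → ℕ) : Set (Fin (n + 1) → Submodule ℂ (Vsp m)) :=
  {L | L 0 = ⊥ ∧ ∀ i : Fin n,
      L i.castSucc ≤ L i.succ ∧
      FiniteDimensional ℂ (L i.succ) ∧
      Module.finrank ℂ (L i.succ) = ∑ j ∈ Finset.Iic i, β j ∧
      Submodule.map (zmap m) (L i.succ) ≤ L i.castSucc}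

lemma sum_Iic_succ_aux {n : ℕ} (β : Fin n → ℕ) (a b : Fin n) (hab : (b : ℕ) = (a : ℕ) + 1) :
    ∑ j ∈ Finset.Iic b, β j = ∑ j ∈ Finset.Iic a, β j + β b := by
  have h : Finset.Iic b = insert b (Finset.Iic a) := by
    ext j
    simp only [Finset.mem_Iic, Finset.mem_insert, Fin.le_def, Fin.ext_iff]
    omega
  have hb : b ∉ Finset.Iic a := by
    simp only [Finset.mem_Iic, Fin.le_def]
    omega
  rw [h, Finset.sum_insert hb]
  ring

/-- Abstract core: birationality of the flop correspondence. -/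
lemma flop_aux {K V : Type*} [Field K] [AddCommGroup V] [Module K V]
    (z : V →ₗ[K] V) (A B C : Submodule K V)
    [FiniteDimensional K B] [FiniteDimensional K C]
    (hAB : A ≤ B) (hBC : B ≤ C)
    (hzB : Submodule.map z B ≤ A) (hzC : Submodule.map z C ≤ B)
    (hrB : finrank K B = finrank K A + 1) (d : ℕ)
    (hrC : finrank K C = finrank K B + d)
    (hnot : ¬ Submodule.map z C ≤ A) (M' : Submodule K V) :
    (A ≤ M' ∧ M' ≤ C ∧ finrank K M' = finrank K A + d ∧
      Submodule.map z C ≤ M' ∧ Submodule.map z M' ≤ A) ↔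
    M' = C ⊓ Submodule.comap z A := by
  have hAC : A ≤ C := hAB.trans hBC
  haveI hAfd : FiniteDimensional K A := Submodule.finiteDimensional_of_le hAC
  set N := C ⊓ Submodule.comap z A with hN
  have hzA : Submodule.map z A ≤ A := (Submodule.map_mono hAB).trans hzB
  have hAN : A ≤ N := le_inf hAC (Submodule.map_le_iff_le_comap.mp hzA)
  have hzCN : Submodule.map z C ≤ N :=
    le_inf (hzC.trans hBC)
      (Submodule.map_le_iff_le_comap.mp ((Submodule.map_mono hzC).trans hzB))
  have hzN : Submodule.map z N ≤ A :=
    (Submodule.map_mono inf_le_right).trans (Submodule.map_comap_le z A)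
  -- compute finrank N
  have hrN : finrank K N = finrank K A + d := by
    set f : C →ₗ[K] V ⧸ A := (A.mkQ ∘ₗ z) ∘ₗ C.subtype with hf
    have hker : LinearMap.ker f = Submodule.comap C.subtype N := by
      ext x
      simp [hf, hN, Submodule.Quotient.mk_eq_zero, x.2]
    have hrange1 : finrank K (LinearMap.range f) = 1 := by
      have hle : LinearMap.range f ≤ Submodule.map A.mkQ B := by
        rintro y ⟨x, rfl⟩
        exact ⟨z x, hzC ⟨x, x.2, rfl⟩, rfl⟩
      have hBmap : finrank K (Submodule.map A.mkQ B) = 1 := by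
        set g : B →ₗ[K] V ⧸ A := A.mkQ ∘ₗ B.subtype with hg
        have hrg : LinearMap.range g = Submodule.map A.mkQ B := by
          rw [hg, LinearMap.range_comp, Submodule.range_subtype]
        have hkg : LinearMap.ker g = Submodule.comap B.subtype A := by
          ext x; simp [hg, Submodule.Quotient.mk_eq_zero]
        have hfk := LinearMap.finrank_range_add_finrank_ker g
        rw [hrg, hkg] at hfk
        have e : finrank K (Submodule.comap B.subtype A) = finrank K A :=
          LinearEquiv.finrank_eq (Submodule.comapSubtypeEquivOfLe hAB)
        omega
      have hpos : LinearMap.range f ≠ ⊥ := by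
        intro hbot
        apply hnot
        rintro y ⟨x, hx, rfl⟩
        have hmem : f ⟨x, hx⟩ ∈ LinearMap.range f := ⟨⟨x, hx⟩, rfl⟩
        rw [hbot, Submodule.mem_bot] at hmem
        simpa [hf, Submodule.Quotient.mk_eq_zero] using hmem
      haveI : Module.Finite K (Submodule.map A.mkQ B) := Module.Finite.map B A.mkQ
      have h1 : finrank K (LinearMap.range f) ≤ 1 := hBmap ▸ Submodule.finrank_mono hle
      have h2 : finrank K (LinearMap.range f) ≠ 0 := by
        intro h
        exact hpos (Submodule.finrank_eq_zero.mp h)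
      omega
    have hfk := LinearMap.finrank_range_add_finrank_ker f
    rw [hrange1, hker] at hfk
    have e : finrank K (Submodule.comap C.subtype N) = finrank K N :=
      LinearEquiv.finrank_eq (Submodule.comapSubtypeEquivOfLe (inf_le_left : N ≤ C))
    omega
  haveI hNfd : FiniteDimensional K N := Submodule.finiteDimensional_of_le inf_le_left
  constructor
  · rintro ⟨hAM, hMC, hMr, hzCM, hzM⟩
    have hMN : M' ≤ N := le_inf hMC (Submodule.map_le_iff_le_comap.mp hzM)
    exact Submodule.eq_of_le_of_finrank_le hMN (by omega)
  · rintro rfl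
    exact ⟨hAN, inf_le_left, hrN, hzCN, hzN⟩

set_option maxHeartbeats 1600000 in
set_option synthInstance.maxHeartbeats 400000 in
/-- Birationality of the flop correspondence: if `β_i = 1`, `β_{i+1} = m-1` (paper indices;
0-based index `i` here) and `L ∈ Y_β` with `z(L_{i+2})` not contained in `L_i`, then
`M = L_{i+2} ⊓ z⁻¹(L_i)` is the unique subspace `M'` with `L_i ≤ M' ≤ L_{i+2}`,
`finrank M' = finrank L_i + (m-1)`, `z(L_{i+2}) ≤ M'`, and `z(M') ≤ L_i`. -/
theorem stmt7 (m n : ℕ) (hm : 2 ≤ m) (β : Fin n → ℕ)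
    (hβ : ∀ j, 1 ≤ β j ∧ β j ≤ m - 1)
    (i : ℕ) (hi : i + 1 < n)
    (hβi : β ⟨i, by omega⟩ = 1) (hβi1 : β ⟨i + 1, hi⟩ = m - 1)
    (L : Fin (n + 1) → Submodule ℂ (Vsp m)) (hL : L ∈ Yset m n β)
    (hnot : ¬ Submodule.map (zmap m) (L ⟨i + 2, by omega⟩) ≤ L ⟨i, by omega⟩) :
    ∀ M' : Submodule ℂ (Vsp m),
      (L ⟨i, by omega⟩ ≤ M' ∧ M' ≤ L ⟨i + 2, by omega⟩ ∧
        finrank ℂ M' = finrank ℂ (L ⟨i, by omega⟩) + (m - 1) ∧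
        Submodule.map (zmap m) (L ⟨i + 2, by omega⟩) ≤ M' ∧
        Submodule.map (zmap m) M' ≤ L ⟨i, by omega⟩) ↔
      M' = L ⟨i + 2, by omega⟩ ⊓ Submodule.comap (zmap m) (L ⟨i, by omega⟩) := by
  obtain ⟨h0, hc⟩ := hL
  set z := zmap m with hz
  set A := L ⟨i, by omega⟩ with hA
  set B := L ⟨i + 1, by omega⟩ with hB
  set C := L ⟨i + 2, by omega⟩ with hC
  have hβi' : ∀ p : i < n, β ⟨i, p⟩ = 1 := fun p => hβi
  have hβi1' : ∀ p : i + 1 < n, β ⟨i + 1, p⟩ = m - 1 := fun p => hβi1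
  have hAB : A ≤ B := (hc ⟨i, by omega⟩).1
  have hBfd : FiniteDimensional ℂ B := (hc ⟨i, by omega⟩).2.1
  have hzB : Submodule.map z B ≤ A := (hc ⟨i, by omega⟩).2.2.2
  have hBC : B ≤ C := (hc ⟨i + 1, hi⟩).1
  have hCfd : FiniteDimensional ℂ C := (hc ⟨i + 1, hi⟩).2.1
  have hzC : Submodule.map z C ≤ B := (hc ⟨i + 1, hi⟩).2.2.2
  haveI : FiniteDimensional ℂ C := hCfd
  haveI : FiniteDimensional ℂ B := hBfd
  -- the rank step
  have hstep : ∀ a b : Fin n, (b : ℕ) = (a : ℕ) + 1 →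
      finrank ℂ (L b.succ) = finrank ℂ (L a.succ) + β b := by
    intro a b hab
    rw [(hc b).2.2.1, (hc a).2.2.1, sum_Iic_succ_aux β a b hab]
  -- finrank relations
  have hrBA : finrank ℂ B = finrank ℂ A + 1 := by
    rcases Nat.eq_zero_or_pos i with hi0 | hip
    · subst hi0
      set b0 : Fin n := ⟨0, by omega⟩ with hb0
      have eB : L b0.succ = B := by rw [hB]; exact congrArg L (Fin.ext rfl)
      have eA : A = L 0 := by rw [hA]; exact congrArg L (Fin.ext (by simp))
      have hIic : Finset.Iic b0 = {b0} := by
        ext j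
        simp only [Finset.mem_Iic, Finset.mem_singleton, Fin.le_def, Fin.ext_iff, hb0]
        omega
      have : finrank ℂ (L b0.succ) = β b0 := by
        rw [(hc b0).2.2.1, hIic, Finset.sum_singleton]
      rw [eA, h0, finrank_bot, ← eB, this, hb0, hβi' _]
    · obtain ⟨k, hik⟩ : ∃ k, i = k + 1 := ⟨i - 1, by omega⟩
      set a : Fin n := ⟨k, by omega⟩ with ha
      set b : Fin n := ⟨k + 1, by omega⟩ with hb
      have eB : L b.succ = B := by rw [hB]; exact congrArg L (Fin.ext (by simp [hb, hik]))
      have eA : L a.succ = A := by rw [hA]; exact congrArg L (Fin.ext (by simp [ha, hik]))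
      have hβb : β b = 1 := by
        have : b = ⟨i, by omega⟩ := Fin.ext (by simp [hb, hik])
        rw [this, hβi' _]
      rw [← eB, ← eA, hstep a b rfl, hβb]
  have hrCB : finrank ℂ C = finrank ℂ B + (m - 1) := by
    set a : Fin n := ⟨i, by omega⟩ with ha
    set b : Fin n := ⟨i + 1, hi⟩ with hb
    have eC : L b.succ = C := by rw [hC]; exact congrArg L (Fin.ext rfl)
    have eB : L a.succ = B := by rw [hB]; exact congrArg L (Fin.ext rfl)
    have hβb : β b = m - 1 := hβi1' _
    rw [← eC, ← eB, hstep a b rfl, hβb]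
  exact flop_aux z A B C hAB hBC hzB hzC hrBA (m - 1) hrCB hnot
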